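/- The parameterized operator P(c₂, c₄) = I + c₂∑_{pairs}σᵢ·σⱼ + c₄∑_{pairings}(σᵢ·σⱼ)(σₖ·σₗ) on (ℂ²)^⊗4 is, at the AKLT point (c₂, c₄) = (1/3, 1/15), a positive multiple of a projector: P(1/3, 1/15)² = (48/15)·P(1/3, 1/15). -/

import Mathlib

/-!
By the Dirac identity σᵢ·σⱼ = 2 Pᵢⱼ - 1, where Pᵢⱼ swaps the tensor factors i and j,
P(c₂, c₄) is a combination of the identity, the six transpositions and the three double
transpositions of the legs. On (ℂ²)^⊗4 the 3- and 4-cycles are not independent of these (an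
antisymmetrizer on three legs vanishes when the local dimension is 2), and at the AKLT point
P(1/3, 1/15) = (2/15) ∑_{π ∈ S₄} π. The unnormalized symmetrizer S = ∑_{π ∈ S₄} π satisfies
S² = 4! S, whence P² = (48/15) P.
-/

open Matrix

/-- The three Pauli matrices. -/
noncomputable def pauli : Fin 3 → Matrix (Fin 2) (Fin 2) ℂ :=
  ![!![0, 1; 1, 0], !![0, -Complex.I; Complex.I, 0], !![1, 0; 0, -1]]

/-- The operator on (ℂ^d)^⊗n permuting tensor factors according to π:
it sends `e_{i₁} ⊗ ... ⊗ e_{i_n}` to `e_{i_{π⁻¹(1)}} ⊗ ... ⊗ e_{i_{π⁻¹(n)}}`. -/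
noncomputable def permOp (d n : ℕ) (π : Equiv.Perm (Fin n)) :
    Matrix (Fin n → Fin d) (Fin n → Fin d) ℂ :=
  Matrix.of fun f g => if f = g ∘ ⇑π⁻¹ then 1 else 0

/-- The one-site operator acting as the 2×2 matrix `A` on tensor factor `i`
of (ℂ²)^⊗n and as the identity elsewhere. -/
noncomputable def opAt {n : ℕ} (i : Fin n) (A : Matrix (Fin 2) (Fin 2) ℂ) :
    Matrix (Fin n → Fin 2) (Fin n → Fin 2) ℂ :=
  Matrix.of fun f g => ∏ k, if k = i then A (f k) (g k) else (if f k = g k then 1 else 0)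

/-- σᵢ·σⱼ = ∑_{a ∈ {x,y,z}} (σᵃ at leg i)(σᵃ at leg j) on (ℂ²)^⊗n. -/
noncomputable def sdot {n : ℕ} (i j : Fin n) :
    Matrix (Fin n → Fin 2) (Fin n → Fin 2) ℂ :=
  ∑ a : Fin 3, opAt i (pauli a) * opAt j (pauli a)

/-- The parameterized operator P(c₂, c₄) on (ℂ²)^⊗4. -/
noncomputable def Pparam (c2 c4 : ℂ) : Matrix (Fin 4 → Fin 2) (Fin 4 → Fin 2) ℂ :=
  1 + c2 • (sdot 0 1 + sdot 0 2 + sdot 0 3 + sdot 1 2 + sdot 1 3 + sdot 2 3)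
    + c4 • (sdot 0 1 * sdot 2 3 + sdot 0 2 * sdot 1 3 + sdot 0 3 * sdot 1 2)

open Equiv

noncomputable def symmetrizer (d n : ℕ) : Matrix (Fin n → Fin d) (Fin n → Fin d) ℂ :=
  ∑ π, permOp d n π

section PermOp

variable {d n : ℕ}

lemma permOp_apply (π : Perm (Fin n)) (f g : Fin n → Fin d) :
    permOp d n π f g = if f = g ∘ ⇑π⁻¹ then 1 else 0 := rfl

lemma permOp_mul (π ρ : Perm (Fin n)) :
    permOp d n π * permOp d n ρ = permOp d n (π * ρ) := by
  ext f g
  simp only [mul_apply, permOp_apply, mul_ite, mul_one, mul_zero]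
  rw [Finset.sum_ite_eq' Finset.univ (g ∘ ⇑ρ⁻¹)]
  simp [_root_.mul_inv_rev, Perm.coe_mul, Function.comp_assoc]

lemma symmetrizer_mul_self :
    symmetrizer d n * symmetrizer d n = (n.factorial : ℂ) • symmetrizer d n := by
  have h : ∀ π, permOp d n π * symmetrizer d n = symmetrizer d n := fun π => by
    rw [symmetrizer, Finset.mul_sum]
    exact Fintype.sum_equiv (Equiv.mulLeft π) _ _ fun ρ => permOp_mul π ρ
  calc symmetrizer d n * symmetrizer d n = ∑ π, permOp d n π * symmetrizer d n :=
        Finset.sum_mul _ _ _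
    _ = ∑ _π : Perm (Fin n), symmetrizer d n := Finset.sum_congr rfl fun π _ => h π
    _ = (n.factorial : ℂ) • symmetrizer d n := by
      rw [Finset.sum_const, Finset.card_univ, Fintype.card_perm, Fintype.card_fin,
        Nat.cast_smul_eq_nsmul]

end PermOp

section Pauli

variable {n : ℕ}

lemma sum_pauli_mul_pauli_apply (α β γ δ : Fin 2) :
    ∑ a, pauli a α β * pauli a γ δ =
      2 * (if α = δ ∧ β = γ then 1 else 0) - (if α = β ∧ γ = δ then 1 else 0) := by
  simp only [Fin.sum_univ_three]
  fin_cases α <;> fin_cases β <;> fin_cases γ <;> fin_cases δ <;> simp [pauli] <;> norm_num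

lemma opAt_apply (i : Fin n) (A : Matrix (Fin 2) (Fin 2) ℂ) (f g : Fin n → Fin 2) :
    opAt i A f g = if ∀ k ≠ i, f k = g k then A (f i) (g i) else 0 := by
  rw [opAt, of_apply, ← Finset.mul_prod_erase _ _ (Finset.mem_univ i), if_pos rfl,
    Finset.prod_congr rfl fun k hk => if_neg (Finset.ne_of_mem_erase hk), Finset.prod_boole]
  simp only [Finset.mem_erase, Finset.mem_univ, and_true, mul_ite, mul_one, mul_zero]

lemma opAt_mul_opAt_apply {i j : Fin n} (hij : i ≠ j) (A B : Matrix (Fin 2) (Fin 2) ℂ)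
    (f g : Fin n → Fin 2) :
    (opAt i A * opAt j B) f g =
      (if ∀ k, k ≠ i → k ≠ j → f k = g k then 1 else 0) *
        (A (f i) (g i) * B (f j) (g j)) := by
  rw [mul_apply, Finset.sum_eq_single (Function.update f i (g i))]
  · have h_left : ∀ k ≠ i, f k = Function.update f i (g i) k :=
      fun k hk => (Function.update_of_ne hk _ _).symm
    have h_right : (∀ k ≠ j, Function.update f i (g i) k = g k) ↔
        ∀ k, k ≠ i → k ≠ j → f k = g k := by
      constructor
      · intro h k hi hj
        simpa [Function.update_of_ne hi] using h k hj
      · intro h k hj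
        by_cases hi : k = i
        · subst hi; simp
        · simp [Function.update_of_ne hi, h k hi hj]
    simp only [opAt_apply, if_pos h_left, Function.update_self, Function.update_of_ne hij.symm,
      h_right]
    split_ifs <;> ring
  · intro h _ hne
    rw [opAt_apply, opAt_apply]
    split_ifs with h_left h_right
    · refine absurd (funext fun k => ?_) hne
      by_cases hk : k = i
      · subst hk; simpa using h_right k hij
      · simpa [Function.update_of_ne hk] using (h_left k hk).symm
    all_goals simp
  · simp

lemma sdot_eq_swap {i j : Fin n} (hij : i ≠ j) :
    sdot i j = (2 : ℂ) • permOp 2 n (swap i j) - 1 := by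
  ext f g
  have h_swap : f = g ∘ ⇑(swap i j)⁻¹ ↔
      (∀ k, k ≠ i → k ≠ j → f k = g k) ∧ f i = g j ∧ g i = f j := by
    rw [swap_inv, funext_iff]
    refine ⟨fun h => ⟨fun k hi hj => ?_, ?_, ?_⟩, fun ⟨h, hi, hj⟩ k => ?_⟩
    · simpa [swap_apply_of_ne_of_ne hi hj] using h k
    · simpa using h i
    · simpa using (h j).symm
    · by_cases hki : k = i
      · subst hki; simpa using hi
      by_cases hkj : k = j
      · subst hkj; simpa using hj.symm
      simpa [swap_apply_of_ne_of_ne hki hkj] using h k hki hkj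
  have h_id : f = g ↔ (∀ k, k ≠ i → k ≠ j → f k = g k) ∧ f i = g i ∧ f j = g j := by
    refine ⟨fun h => h ▸ ⟨fun _ _ _ => rfl, rfl, rfl⟩,
      fun ⟨h, hi, hj⟩ => funext fun k => ?_⟩
    by_cases hki : k = i
    · exact hki ▸ hi
    by_cases hkj : k = j
    · exact hkj ▸ hj
    exact h k hki hkj
  simp only [sdot, Matrix.sum_apply, opAt_mul_opAt_apply hij, ← Finset.mul_sum,
    sum_pauli_mul_pauli_apply, Matrix.sub_apply, Matrix.smul_apply, permOp_apply, one_apply,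
    h_swap, h_id, smul_eq_mul]
  by_cases hoff : ∀ k, k ≠ i → k ≠ j → f k = g k
  · simp only [eq_true hoff, true_and, if_true, one_mul]
  · simp only [eq_false hoff, false_and, if_false, sub_zero, zero_mul, mul_zero]

lemma sdot_mul_sdot {i j k l : Fin n} (hij : i ≠ j) (hkl : k ≠ l) :
    sdot i j * sdot k l = (4 : ℂ) • permOp 2 n (swap i j * swap k l)
      - (2 : ℂ) • permOp 2 n (swap i j) - (2 : ℂ) • permOp 2 n (swap k l) + 1 := by
  rw [sdot_eq_swap hij, sdot_eq_swap hkl, ← permOp_mul]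
  simp only [sub_mul, mul_sub, mul_one, one_mul, smul_mul_assoc, mul_smul_comm]
  module

end Pauli

noncomputable def transpositionSum : Matrix (Fin 4 → Fin 2) (Fin 4 → Fin 2) ℂ :=
  permOp 2 4 (swap 0 1) + permOp 2 4 (swap 0 2) + permOp 2 4 (swap 0 3) +
    permOp 2 4 (swap 1 2) + permOp 2 4 (swap 1 3) + permOp 2 4 (swap 2 3)

noncomputable def doubleTranspositionSum : Matrix (Fin 4 → Fin 2) (Fin 4 → Fin 2) ℂ :=
  permOp 2 4 (swap 0 1 * swap 2 3) + permOp 2 4 (swap 0 2 * swap 1 3) +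
    permOp 2 4 (swap 0 3 * swap 1 2)

lemma Pparam_eq_transposition_sums (c2 c4 : ℂ) :
    Pparam c2 c4 = (1 - 6 * c2 + 3 * c4) • 1 + (2 * c2 - 2 * c4) • transpositionSum
      + (4 * c4) • doubleTranspositionSum := by
  rw [Pparam, sdot_mul_sdot (by decide) (by decide), sdot_mul_sdot (by decide) (by decide),
    sdot_mul_sdot (by decide) (by decide),
    sdot_eq_swap (by decide : (0 : Fin 4) ≠ 1), sdot_eq_swap (by decide : (0 : Fin 4) ≠ 2),
    sdot_eq_swap (by decide : (0 : Fin 4) ≠ 3), sdot_eq_swap (by decide : (1 : Fin 4) ≠ 2),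
    sdot_eq_swap (by decide : (1 : Fin 4) ≠ 3), sdot_eq_swap (by decide : (2 : Fin 4) ≠ 3),
    transpositionSum, doubleTranspositionSum]
  module

lemma symmetrizer_two_four_eq : symmetrizer 2 4 =
    (-6 : ℂ) • 1 + (4 : ℂ) • transpositionSum + (2 : ℂ) • doubleTranspositionSum := by
  -- The one place where the local dimension 2 enters: on (ℂ²)^⊗4 the 3- and 4-cycles are
  -- combinations of the identity, the transpositions and the double transpositions.
  have key : ∀ f g : Fin 4 → Fin 2,
      let χ : Perm (Fin 4) → ℕ := fun π => if f = g ∘ ⇑π⁻¹ then 1 else 0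
      ∑ π, χ π + 6 * χ 1 =
        4 * (χ (swap 0 1) + χ (swap 0 2) + χ (swap 0 3) + χ (swap 1 2) + χ (swap 1 3)
            + χ (swap 2 3))
          + 2 * (χ (swap 0 1 * swap 2 3) + χ (swap 0 2 * swap 1 3)
            + χ (swap 0 3 * swap 1 2)) := by
    decide +kernel
  ext f g
  have h := congrArg (Nat.cast : ℕ → ℂ) (key f g)
  simp only [inv_one, Perm.coe_one, Function.comp_id, Nat.cast_add, Nat.cast_mul, Nat.cast_sum,
    Nat.cast_ite, Nat.cast_one, Nat.cast_zero, Nat.cast_ofNat] at h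
  simp only [symmetrizer, transpositionSum, doubleTranspositionSum, Matrix.sum_apply,
    Matrix.add_apply, Matrix.smul_apply, Matrix.one_apply, permOp_apply, smul_eq_mul]
  linear_combination h

lemma Pparam_aklt_eq_symmetrizer : Pparam (1/3) (1/15) = (2/15 : ℂ) • symmetrizer 2 4 := by
  rw [Pparam_eq_transposition_sums, symmetrizer_two_four_eq]
  module

theorem Pparam_aklt_proj :
    Pparam (1/3) (1/15) * Pparam (1/3) (1/15) = (48/15 : ℂ) • Pparam (1/3) (1/15) := by
  rw [Pparam_aklt_eq_symmetrizer, smul_mul_smul_comm, symmetrizer_mul_self, smul_smul, smul_smul]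
  norm_num [Nat.factorial]
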